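/- arXiv:2209.05586 — 2 statements merged into one kernel-verified Lean document; each statement's English description precedes it below -/
import Mathlib

section
/- Let H ∈ (1/2, 1) be a real number. Then the function r ↦ (r^{1/2−H} − 1)·(1−r)^{−(1/2+H)} is Lebesgue integrable on the interval (0, 1), and its integral g₀ := ∫_0^1 (r^{1/2−H} − 1)·(1−r)^{−(1/2+H)} dr is strictly positive. -/
open MeasureTheory Set Real

private lemma stmt3_meas (H : ℝ) :
    Measurable (fun r : ℝ => (r ^ (1/2 - H) - 1) * (1 - r) ^ (-(1/2 + H))) := by
  fun_prop

private lemma stmt3_pos (H : ℝ) (hH : H ∈ Set.Ioo (1/2 : ℝ) 1) {r : ℝ}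
    (hr : r ∈ Set.Ioo (0:ℝ) 1) :
    0 < (r ^ (1/2 - H) - 1) * (1 - r) ^ (-(1/2 + H)) := by
  obtain ⟨hr0, hr1⟩ := hr
  have h1 : (1:ℝ) < r ^ (1/2 - H) := by
    rw [Real.one_lt_rpow_iff_of_pos hr0]
    right; constructor <;> [exact hr1; linarith [hH.1]]
  have h2 : (0:ℝ) < (1 - r) ^ (-(1/2 + H)) := Real.rpow_pos_of_pos (by linarith) _
  nlinarith

-- integrability on (0, 1/2]
private lemma stmt3_int_left (H : ℝ) (hH : H ∈ Set.Ioo (1/2 : ℝ) 1) :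
    IntegrableOn
      (fun r : ℝ => (r ^ (1/2 - H) - 1) * (1 - r) ^ (-(1/2 + H)))
      (Set.Ioc 0 (1/2)) := by
  have ha : (-1 : ℝ) < 1/2 - H := by linarith [hH.2]
  have hg : IntegrableOn (fun r : ℝ => (1/2 : ℝ) ^ (-(1/2 + H)) * r ^ (1/2 - H))
      (Set.Ioc 0 (1/2)) := by
    have := (intervalIntegral.intervalIntegrable_rpow' (a := 0) (b := 1/2) ha)
    rw [intervalIntegrable_iff, Set.uIoc_of_le (by norm_num : (0:ℝ) ≤ 1/2)] at this
    exact this.const_mul _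
  refine hg.integrable.mono ((stmt3_meas H).aestronglyMeasurable) ?_
  filter_upwards [ae_restrict_mem measurableSet_Ioc] with r hr
  obtain ⟨hr0, hr1⟩ := hr
  have hr1' : r < 1 := by linarith
  have hpos := stmt3_pos H hH ⟨hr0, hr1'⟩
  rw [Real.norm_of_nonneg hpos.le, Real.norm_of_nonneg (mul_nonneg (Real.rpow_nonneg (by norm_num) _) (Real.rpow_nonneg hr0.le _))]
  have h1 : r ^ (1/2 - H) - 1 ≤ r ^ (1/2 - H) := by linarith
  have h2 : (1 - r) ^ (-(1/2 + H)) ≤ (1/2 : ℝ) ^ (-(1/2 + H)) := by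
    apply Real.rpow_le_rpow_of_nonpos (by norm_num) (by linarith)
      (by linarith [hH.1])
  calc (r ^ (1/2 - H) - 1) * (1 - r) ^ (-(1/2 + H))
      ≤ r ^ (1/2 - H) * (1/2 : ℝ) ^ (-(1/2 + H)) := by
        apply mul_le_mul h1 h2 (Real.rpow_nonneg (by linarith) _) (Real.rpow_nonneg hr0.le _)
    _ = (1/2 : ℝ) ^ (-(1/2 + H)) * r ^ (1/2 - H) := mul_comm _ _

-- integrability on (1/2, 1)
private lemma stmt3_int_right (H : ℝ) (hH : H ∈ Set.Ioo (1/2 : ℝ) 1) :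
    IntegrableOn
      (fun r : ℝ => (r ^ (1/2 - H) - 1) * (1 - r) ^ (-(1/2 + H)))
      (Set.Ioo (1/2) 1) := by
  have ha : (-1 : ℝ) < 1/2 - H := by linarith [hH.2]
  have hg : IntegrableOn (fun r : ℝ => (2:ℝ) ^ (H - 1/2) * (1 - r) ^ (1/2 - H))
      (Set.Ioo (1/2) 1) := by
    have h0 := intervalIntegral.intervalIntegrable_rpow' (a := 0) (b := 1/2) ha
    have h1 := (h0.comp_sub_left 1).symm
    norm_num at h1
    rw [intervalIntegrable_iff, Set.uIoc_of_le (by norm_num : (1/2:ℝ) ≤ 1)] at h1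
    exact ((h1.mono_set Set.Ioo_subset_Ioc_self).const_mul _)
  refine hg.integrable.mono ((stmt3_meas H).aestronglyMeasurable) ?_
  filter_upwards [ae_restrict_mem measurableSet_Ioo] with r hr
  obtain ⟨hr0, hr1⟩ := hr
  have hrpos : (0:ℝ) < r := by linarith
  have hpos := stmt3_pos H hH ⟨hrpos, hr1⟩
  rw [Real.norm_of_nonneg hpos.le, Real.norm_of_nonneg (mul_nonneg (Real.rpow_nonneg (by norm_num) _) (Real.rpow_nonneg (by linarith) _))]
  -- key: r^(1/2-H) - 1 = r^(1/2-H) * (1 - r^(H-1/2)) ≤ r^(1/2-H) * (1 - r) ≤ 2^(H-1/2) (1-r)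
  have hkey : r ^ (1/2 - H) - 1 ≤ (2:ℝ) ^ (H - 1/2) * (1 - r) := by
    have e1 : r ^ (1/2 - H) * r ^ (H - 1/2) = 1 := by
      rw [← Real.rpow_add hrpos]; norm_num
    have e2 : r ^ (1:ℝ) ≤ r ^ (H - 1/2) :=
      Real.rpow_le_rpow_of_exponent_ge hrpos hr1.le (by linarith [hH.2])
    rw [Real.rpow_one] at e2
    have e3 : r ^ (1/2 - H) ≤ (2:ℝ) ^ (H - 1/2) := by
      have : r ^ (1/2 - H) ≤ (1/2 : ℝ) ^ (1/2 - H) :=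
        Real.rpow_le_rpow_of_nonpos (by norm_num) hr0.le (by linarith [hH.1])
      calc r ^ (1/2 - H) ≤ (1/2 : ℝ) ^ (1/2 - H) := this
        _ = (2:ℝ) ^ (H - 1/2) := by
            rw [one_div, Real.inv_rpow (by norm_num), ← Real.rpow_neg (by norm_num)]
            norm_num
    have e4 : r ^ (1/2 - H) - 1 = r ^ (1/2 - H) * (1 - r ^ (H - 1/2)) := by
      rw [mul_sub, mul_one, e1]
    rw [e4]
    have hnn : 0 ≤ 1 - r ^ (H - 1/2) := by
      have : r ^ (H - 1/2) ≤ 1 :=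
        Real.rpow_le_one hrpos.le hr1.le (by linarith [hH.1])
      linarith
    calc r ^ (1/2 - H) * (1 - r ^ (H - 1/2))
        ≤ (2:ℝ) ^ (H - 1/2) * (1 - r ^ (H - 1/2)) := by
          exact mul_le_mul_of_nonneg_right e3 hnn
      _ ≤ (2:ℝ) ^ (H - 1/2) * (1 - r) := by
          apply mul_le_mul_of_nonneg_left (by linarith) (by positivity)
  have hsplit : (1 - r) ^ (-(1/2 + H)) * (1 - r) = (1 - r) ^ (1/2 - H) := by
    rw [show (1/2 - H : ℝ) = -(1/2 + H) + 1 by ring, Real.rpow_add (by linarith),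
      Real.rpow_one]
  calc (r ^ (1/2 - H) - 1) * (1 - r) ^ (-(1/2 + H))
      ≤ ((2:ℝ) ^ (H - 1/2) * (1 - r)) * (1 - r) ^ (-(1/2 + H)) :=
        mul_le_mul_of_nonneg_right hkey (Real.rpow_nonneg (by linarith) _)
    _ = (2:ℝ) ^ (H - 1/2) * ((1 - r) ^ (-(1/2 + H)) * (1 - r)) := by ring
    _ = (2:ℝ) ^ (H - 1/2) * (1 - r) ^ (1/2 - H) := by rw [hsplit]

/-- For `H ∈ (1/2,1)`, the function `r ↦ (r^{1/2-H} - 1)(1-r)^{-(1/2+H)}` is Lebesgue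
integrable on `(0,1)` and its integral `g₀` is strictly positive. -/
theorem stmt_3 (H : ℝ) (hH : H ∈ Set.Ioo (1/2 : ℝ) 1) :
    IntegrableOn
      (fun r : ℝ => (r ^ (1/2 - H) - 1) * (1 - r) ^ (-(1/2 + H))) (Set.Ioo 0 1) ∧
    0 < ∫ r in Set.Ioo (0:ℝ) 1, (r ^ (1/2 - H) - 1) * (1 - r) ^ (-(1/2 + H)) := by
  have hint : IntegrableOn
      (fun r : ℝ => (r ^ (1/2 - H) - 1) * (1 - r) ^ (-(1/2 + H))) (Set.Ioo 0 1) := by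
    have := (stmt3_int_left H hH).union (stmt3_int_right H hH)
    apply this.mono_set
    intro x hx
    rcases le_or_gt x (1/2) with h | h
    · exact Or.inl ⟨hx.1, h⟩
    · exact Or.inr ⟨h, hx.2⟩
  refine ⟨hint, ?_⟩
  have hae : 0 ≤ᵐ[volume.restrict (Set.Ioo (0:ℝ) 1)]
      (fun r : ℝ => (r ^ (1/2 - H) - 1) * (1 - r) ^ (-(1/2 + H))) := by
    filter_upwards [ae_restrict_mem measurableSet_Ioo] with r hr
    exact (stmt3_pos H hH hr).le
  rw [setIntegral_pos_iff_support_of_nonneg_ae hae hint]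
  have hsub : Set.Ioo (0:ℝ) 1 ⊆
      Function.support (fun r : ℝ => (r ^ (1/2 - H) - 1) * (1 - r) ^ (-(1/2 + H)))
        ∩ Set.Ioo 0 1 :=
    fun x hx => ⟨(stmt3_pos H hH hx).ne', hx⟩
  calc (0:ENNReal) < volume (Set.Ioo (0:ℝ) 1) := by simp
    _ ≤ _ := measure_mono hsub
end

section
/- Let H ∈ (1/2, 1), α₀ ∈ (H − 1/2, 1], K ≥ 0, T > 0, and let f : [0, T] → ℝ satisfy |f(t) − f(s)| ≤ K·|t − s|^{α₀} for all s, t ∈ [0, T]. Then for every u ∈ (0, T]: the function s ↦ s^{1/2−H}·(f(u) − f(s))·(u−s)^{−(H+1/2)} is Lebesgue integrable on (0, u); the constant B := ∫_0^1 r^{1/2−H}·(1−r)^{α₀−H−1/2} dr is finite; and u^{H−1/2}·|∫_0^u s^{1/2−H}·(f(u) − f(s))·(u−s)^{−(H+1/2)} ds| ≤ K·B·u^{α₀−H+1/2}. -/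
open MeasureTheory Filter Topology

/-!
The Hölder bound `|f u - f s| ≤ K (u - s)^α₀` dominates the integrand by `K` times the Beta kernel
`s^(1/2 - H) (u - s)^(α₀ - H - 1/2)`, whose exponents both exceed `-1` because `H < 1` and
`α₀ > H - 1/2`. The substitution `s = u r` turns the integral of that kernel over `(0, u)` into
`u^(α₀ - 2H + 1) B`.
-/

theorem intervalIntegrable_rpow_mul_one_sub_rpow {a b : ℝ} (ha : -1 < a) (hb : -1 < b) :
    IntervalIntegrable (fun r : ℝ => r ^ a * (1 - r) ^ b) volume 0 1 := by
  have hβ := (Complex.betaIntegral_convergent (u := a + 1) (v := b + 1)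
    (by simp; linarith) (by simp; linarith)).1.re
  rw [intervalIntegrable_iff_integrableOn_Ioc_of_le zero_le_one]
  refine IntegrableOn.congr_fun hβ (fun r hr => ?_) measurableSet_Ioc
  simp only [add_sub_cancel_right, RCLike.re_to_complex]
  rw [← Complex.ofReal_one, ← Complex.ofReal_sub, ← Complex.ofReal_cpow hr.1.le,
    ← Complex.ofReal_cpow (by linarith [hr.2]), ← Complex.ofReal_mul, Complex.ofReal_re]

theorem mul_rpow_mul_sub_mul_rpow {a b u r : ℝ} (hu : 0 < u) (hr : r ∈ Set.Icc (0 : ℝ) 1) :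
    (u * r) ^ a * (u - u * r) ^ b = u ^ (a + b) * (r ^ a * (1 - r) ^ b) := by
  rw [← mul_one_sub, Real.mul_rpow hu.le hr.1, Real.mul_rpow hu.le (by linarith [hr.2]),
    Real.rpow_add hu]
  ring

theorem integrableOn_rpow_mul_sub_rpow {a b u : ℝ} (ha : -1 < a) (hb : -1 < b) (hu : 0 < u) :
    IntegrableOn (fun s : ℝ => s ^ a * (u - s) ^ b) (Set.Ioo 0 u) := by
  rw [← intervalIntegrable_iff_integrableOn_Ioo_of_le hu.le,
    ← IntervalIntegrable.comp_mul_left_iff hu.ne', zero_div, div_self hu.ne']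
  refine ((intervalIntegrable_rpow_mul_one_sub_rpow ha hb).const_mul (u ^ (a + b))).congr_uIoo ?_
  intro r hr
  rw [Set.uIoo_of_le zero_le_one] at hr
  exact (mul_rpow_mul_sub_mul_rpow hu (Set.Ioo_subset_Icc_self hr)).symm

theorem setIntegral_rpow_mul_sub_rpow (a b : ℝ) {u : ℝ} (hu : 0 < u) :
    ∫ s in Set.Ioo 0 u, s ^ a * (u - s) ^ b =
      u ^ (a + b + 1) * ∫ r in Set.Ioo 0 1, r ^ a * (1 - r) ^ b := by
  have hsubst := intervalIntegral.smul_integral_comp_mul_left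
    (fun s : ℝ => s ^ a * (u - s) ^ b) u (a := 0) (b := 1)
  rw [mul_zero, mul_one, intervalIntegral.integral_congr
    (g := fun r => u ^ (a + b) * (r ^ a * (1 - r) ^ b))
    (fun r hr => mul_rpow_mul_sub_mul_rpow hu (by rwa [Set.uIcc_of_le zero_le_one] at hr)),
    intervalIntegral.integral_const_mul, smul_eq_mul] at hsubst
  simp only [← integral_Ioc_eq_integral_Ioo, ← intervalIntegral.integral_of_le hu.le,
    ← intervalIntegral.integral_of_le zero_le_one, ← hsubst, Real.rpow_add_one hu.ne']
  ring

theorem continuousOn_of_abs_sub_le_mul_rpow {f : ℝ → ℝ} {S : Set ℝ} {K α : ℝ} (hα : 0 < α)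
    (hf : ∀ s ∈ S, ∀ t ∈ S, |f t - f s| ≤ K * |t - s| ^ α) : ContinuousOn f S := by
  intro x hx
  have hlim : Tendsto (fun t => K * |t - x| ^ α) (𝓝 x) (𝓝 (K * |x - x| ^ α)) :=
    ((Real.continuous_rpow_const hα.le).comp (continuous_sub_right x).abs).const_mul K |>.tendsto x
  rw [sub_self, abs_zero, Real.zero_rpow hα.ne', mul_zero] at hlim
  rw [ContinuousWithinAt, tendsto_iff_norm_sub_tendsto_zero]
  exact squeeze_zero' (Eventually.of_forall fun _ => norm_nonneg _)
    (eventually_nhdsWithin_of_forall fun t ht => hf x hx t ht) (hlim.mono_left nhdsWithin_le_nhds)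

section HolderKernel

variable {f : ℝ → ℝ} {u K α a c : ℝ}

theorem abs_rpow_mul_mul_sub_rpow_le {s d : ℝ} (hs : 0 ≤ s) (hsu : s < u)
    (hd : |d| ≤ K * (u - s) ^ α) :
    |s ^ a * d * (u - s) ^ (-c)| ≤ K * (s ^ a * (u - s) ^ (α - c)) := by
  have hus : 0 < u - s := sub_pos.mpr hsu
  rw [abs_mul, abs_mul, abs_of_nonneg (Real.rpow_nonneg hs _),
    abs_of_nonneg (Real.rpow_nonneg hus.le _), sub_eq_add_neg α, Real.rpow_add hus]
  calc s ^ a * |d| * (u - s) ^ (-c)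
      ≤ s ^ a * (K * (u - s) ^ α) * (u - s) ^ (-c) := by gcongr
    _ = K * (s ^ a * ((u - s) ^ α * (u - s) ^ (-c))) := by ring

theorem continuousOn_rpow_mul_sub_mul_sub_rpow (hf : ContinuousOn f (Set.Ioo 0 u)) :
    ContinuousOn (fun s => s ^ a * (f u - f s) * (u - s) ^ (-c)) (Set.Ioo 0 u) :=
  ((continuousOn_id.rpow_const fun _ hs => Or.inl hs.1.ne').mul (continuousOn_const.sub hf)).mul
    ((continuousOn_const.sub continuousOn_id).rpow_const fun _ hs => Or.inl (sub_pos.mpr hs.2).ne')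

theorem integrableOn_rpow_mul_sub_mul_sub_rpow_and_abs_integral_le
    (hf : ContinuousOn f (Set.Ioo 0 u)) (hd : ∀ s ∈ Set.Ioo 0 u, |f u - f s| ≤ K * (u - s) ^ α)
    (hg : IntegrableOn (fun s => s ^ a * (u - s) ^ (α - c)) (Set.Ioo 0 u)) :
    IntegrableOn (fun s => s ^ a * (f u - f s) * (u - s) ^ (-c)) (Set.Ioo 0 u) ∧
      |∫ s in Set.Ioo 0 u, s ^ a * (f u - f s) * (u - s) ^ (-c)| ≤
        K * ∫ s in Set.Ioo 0 u, s ^ a * (u - s) ^ (α - c) := by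
  have hle : ∀ᵐ s ∂volume.restrict (Set.Ioo 0 u),
      ‖s ^ a * (f u - f s) * (u - s) ^ (-c)‖ ≤ K * (s ^ a * (u - s) ^ (α - c)) :=
    ae_restrict_of_forall_mem measurableSet_Ioo fun s hs =>
      abs_rpow_mul_mul_sub_rpow_le hs.1.le hs.2 (hd s hs)
  refine ⟨(hg.const_mul K).mono' ?_ hle, ?_⟩
  · exact (continuousOn_rpow_mul_sub_mul_sub_rpow hf).aestronglyMeasurable measurableSet_Ioo
  · rw [← integral_const_mul]
    exact norm_integral_le_of_norm_le (hg.const_mul K) hle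

end HolderKernel

theorem stmt_4_general (H α₀ K T : ℝ) (hH : H ∈ Set.Ioo (1/2 : ℝ) 1)
    (hα : α₀ ∈ Set.Ioc (H - 1/2) 1)
    (f : ℝ → ℝ)
    (hf : ∀ s ∈ Set.Icc (0:ℝ) T, ∀ t ∈ Set.Icc (0:ℝ) T, |f t - f s| ≤ K * |t - s| ^ α₀) :
    ∀ u ∈ Set.Ioc (0:ℝ) T,
      IntegrableOn
        (fun s : ℝ => s ^ (1/2 - H) * (f u - f s) * (u - s) ^ (-(H + 1/2))) (Set.Ioo 0 u) ∧
      IntegrableOn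
        (fun r : ℝ => r ^ (1/2 - H) * (1 - r) ^ (α₀ - H - 1/2)) (Set.Ioo 0 1) ∧
      u ^ (H - 1/2) *
          |∫ s in Set.Ioo (0:ℝ) u, s ^ (1/2 - H) * (f u - f s) * (u - s) ^ (-(H + 1/2))| ≤
        K * (∫ r in Set.Ioo (0:ℝ) 1, r ^ (1/2 - H) * (1 - r) ^ (α₀ - H - 1/2)) *
          u ^ (α₀ - H + 1/2) := by
  rintro u ⟨hu, huT⟩
  rw [show α₀ - H - 1/2 = α₀ - (H + 1/2) by ring]
  have ha : -1 < 1/2 - H := by linarith [hH.2]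
  have hb : -1 < α₀ - (H + 1/2) := by linarith [hα.1]
  have hsub : Set.Ioo 0 u ⊆ Set.Icc 0 T := fun s hs => ⟨hs.1.le, hs.2.le.trans huT⟩
  obtain ⟨hF, hF_le⟩ := integrableOn_rpow_mul_sub_mul_sub_rpow_and_abs_integral_le
    ((continuousOn_of_abs_sub_le_mul_rpow (by linarith [hH.1, hα.1]) hf).mono hsub)
    (fun s hs => by simpa [abs_of_pos (sub_pos.mpr hs.2)] using hf s (hsub hs) u ⟨hu.le, huT⟩)
    (integrableOn_rpow_mul_sub_rpow ha hb hu)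
  refine ⟨hF, integrableOn_rpow_mul_sub_rpow ha hb one_pos, ?_⟩
  calc _ ≤ u ^ (H - 1/2) *
          (K * ∫ s in Set.Ioo 0 u, s ^ (1/2 - H) * (u - s) ^ (α₀ - (H + 1/2))) := by
        gcongr
    _ = K * (∫ r in Set.Ioo 0 1, r ^ (1/2 - H) * (1 - r) ^ (α₀ - (H + 1/2))) *
          (u ^ (H - 1/2) * u ^ (1/2 - H + (α₀ - (H + 1/2)) + 1)) := by
        rw [setIntegral_rpow_mul_sub_rpow _ _ hu]
        ring
    _ = _ := by
        rw [← Real.rpow_add hu]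
        ring_nf

/-- For a Hölder continuous `f` of order `α₀ ∈ (H - 1/2, 1]` on `[0,T]` and `u ∈ (0,T]`,
the function `s ↦ s^{1/2-H}(f(u)-f(s))(u-s)^{-(H+1/2)}` is integrable on `(0,u)`,
`B := ∫_0^1 r^{1/2-H}(1-r)^{α₀-H-1/2} dr` is finite, and
`u^{H-1/2}|∫_0^u s^{1/2-H}(f(u)-f(s))(u-s)^{-(H+1/2)} ds| ≤ K·B·u^{α₀-H+1/2}`. -/
theorem stmt_4 (H α₀ K T : ℝ) (hH : H ∈ Set.Ioo (1/2 : ℝ) 1)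
    (hα : α₀ ∈ Set.Ioc (H - 1/2) 1) (hK : 0 ≤ K) (hT : 0 < T)
    (f : ℝ → ℝ)
    (hf : ∀ s ∈ Set.Icc (0:ℝ) T, ∀ t ∈ Set.Icc (0:ℝ) T, |f t - f s| ≤ K * |t - s| ^ α₀) :
    ∀ u ∈ Set.Ioc (0:ℝ) T,
      IntegrableOn
        (fun s : ℝ => s ^ (1/2 - H) * (f u - f s) * (u - s) ^ (-(H + 1/2))) (Set.Ioo 0 u) ∧
      IntegrableOn
        (fun r : ℝ => r ^ (1/2 - H) * (1 - r) ^ (α₀ - H - 1/2)) (Set.Ioo 0 1) ∧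
      u ^ (H - 1/2) *
          |∫ s in Set.Ioo (0:ℝ) u, s ^ (1/2 - H) * (f u - f s) * (u - s) ^ (-(H + 1/2))| ≤
        K * (∫ r in Set.Ioo (0:ℝ) 1, r ^ (1/2 - H) * (1 - r) ^ (α₀ - H - 1/2)) *
          u ^ (α₀ - H + 1/2) :=
  stmt_4_general H α₀ K T hH hα f hf
end
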